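/- arXiv:2304.14606 — 3 statements merged into one kernel-verified Lean document; each statement's English description precedes it below -/
import Mathlib

section
/- Let β ∈ ℝ^D with β ≠ 0, let h_β be the linear classifier, and let a*(·) denote the closed-form optimal action. Fix a coordinate d° ∈ {1, …, D}. Let X be a random vector in ℝ^D (on some probability space) such that X_{d°} is square-integrable and (β·X)² is integrable. Set μ = E[X_{d°}] and σ² = E[(X_{d°} − μ)²], and let X̂ be the random vector with X̂_{d°} = μ and X̂_d = X_d for d ≠ d°. Then E[‖a*(X̂) − a*(X)‖₂²] ≤ (1/‖β‖₂²) · ( β_{d°}² · σ² + E[(β·X)² · 1{h_β(X) ≠ h_β(X̂)}] ). -/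
open MeasureTheory
open scoped RealInnerProductSpace

noncomputable section

/-- The linear classifier `h_β`. -/
def hbeta {D : ℕ} (β x : EuclideanSpace ℝ (Fin D)) : ℤ :=
  if 0 ≤ ⟪β, x⟫ then 1 else -1

/-- The closed-form optimal action `a*(x)`. -/
def aStar {D : ℕ} (β x : EuclideanSpace ℝ (Fin D)) : EuclideanSpace ℝ (Fin D) :=
  if hbeta β x = -1 then -((⟪β, x⟫ / ‖β‖ ^ 2) • β) else 0

/-!
Since `a*(x) = -(min (β·x) 0 / ‖β‖²) β` and `t ↦ min t 0` is 1-Lipschitz, pointwise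
`‖a*(y) - a*(x)‖² ≤ (β·y - β·x)² / ‖β‖²`. Imputing `m` at `d0` shifts `β·x` by
`β_{d0} (m - x_{d0})`, so taking expectations bounds the left-hand side by `β_{d0}² σ² / ‖β‖²`;
the misclassification term is nonnegative.
-/

theorem sq_min_zero_sub_min_zero_le (u v : ℝ) : (min v 0 - min u 0) ^ 2 ≤ (v - u) ^ 2 :=
  sq_le_sq.2 (by simpa using abs_min_sub_min_le_max v 0 u 0)

section

variable {D : ℕ}

theorem aStar_eq_smul (β x : EuclideanSpace ℝ (Fin D)) :
    aStar β x = (-(min ⟪β, x⟫ 0 / ‖β‖ ^ 2)) • β := by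
  by_cases h : 0 ≤ ⟪β, x⟫
  · simp [aStar, hbeta, h]
  · simp [aStar, hbeta, h, min_eq_left (not_le.1 h).le, neg_smul]

theorem norm_aStar_sub_aStar_sq (β x y : EuclideanSpace ℝ (Fin D)) :
    ‖aStar β y - aStar β x‖ ^ 2 = (min ⟪β, y⟫ 0 - min ⟪β, x⟫ 0) ^ 2 / ‖β‖ ^ 2 := by
  rcases eq_or_ne β 0 with rfl | hβ
  · simp [aStar]
  rw [aStar_eq_smul, aStar_eq_smul, ← sub_smul, norm_smul, mul_pow, Real.norm_eq_abs, sq_abs]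
  field_simp
  ring

theorem norm_aStar_sub_aStar_sq_le (β x y : EuclideanSpace ℝ (Fin D)) :
    ‖aStar β y - aStar β x‖ ^ 2 ≤ (⟪β, y⟫ - ⟪β, x⟫) ^ 2 / ‖β‖ ^ 2 := by
  rw [norm_aStar_sub_aStar_sq]
  exact div_le_div_of_nonneg_right (sq_min_zero_sub_min_zero_le _ _) (by positivity)

theorem inner_sub_inner_of_eq_ite (β : EuclideanSpace ℝ (Fin D))
    {x y : EuclideanSpace ℝ (Fin D)} {d0 : Fin D} {m : ℝ}
    (h : ∀ d, y d = if d = d0 then m else x d) : ⟪β, y⟫ - ⟪β, x⟫ = β d0 * (m - x d0) := by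
  have hy : y = x + EuclideanSpace.single d0 (m - x d0) := by
    ext d
    by_cases hd : d = d0 <;> simp [h, hd]
  rw [hy, inner_add_right, add_sub_cancel_left, EuclideanSpace.inner_single_right]
  simp [mul_comm]

end

theorem integrable_sub_const_sq {Ω : Type*} [MeasurableSpace Ω] {μ : Measure Ω}
    [IsFiniteMeasure μ] {f : Ω → ℝ} (hf : AEStronglyMeasurable f μ)
    (hf2 : Integrable (fun ω => f ω ^ 2) μ) (c : ℝ) :
    Integrable (fun ω => (f ω - c) ^ 2) μ :=
  (memLp_two_iff_integrable_sq (hf.sub aestronglyMeasurable_const)).1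
    (((memLp_two_iff_integrable_sq hf).2 hf2).sub (memLp_const c))

theorem stmt4_general {D : ℕ} (β : EuclideanSpace ℝ (Fin D)) (d0 : Fin D)
    {Ω : Type*} [MeasurableSpace Ω] (μ : Measure Ω) [IsProbabilityMeasure μ]
    (X : Ω → EuclideanSpace ℝ (Fin D)) (hX : Measurable X)
    (hX2 : Integrable (fun ω => (X ω d0) ^ 2) μ)
    (m σ2 : ℝ) (Xhat : Ω → EuclideanSpace ℝ (Fin D))
    (hσ2 : σ2 = ∫ ω, (X ω d0 - m) ^ 2 ∂μ)
    (hXhat : ∀ ω d, Xhat ω d = if d = d0 then m else X ω d) :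
    ∫ ω, ‖aStar β (Xhat ω) - aStar β (X ω)‖ ^ 2 ∂μ ≤
      (1 / ‖β‖ ^ 2) *
        (β d0 ^ 2 * σ2 +
          ∫ ω, (if hbeta β (X ω) ≠ hbeta β (Xhat ω) then (⟪β, X ω⟫ : ℝ) ^ 2 else 0) ∂μ) := by
  have hvar : Integrable (fun ω => (X ω d0 - m) ^ 2) μ :=
    integrable_sub_const_sq (by fun_prop : Measurable fun ω => X ω d0).aestronglyMeasurable hX2 m
  have hpoint (ω : Ω) : ‖aStar β (Xhat ω) - aStar β (X ω)‖ ^ 2 ≤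
      1 / ‖β‖ ^ 2 * (β d0 ^ 2 * (X ω d0 - m) ^ 2) := by
    have hshift : (⟪β, Xhat ω⟫ - ⟪β, X ω⟫) ^ 2 = β d0 ^ 2 * (X ω d0 - m) ^ 2 := by
      rw [inner_sub_inner_of_eq_ite β (hXhat ω)]
      ring
    rw [one_div_mul_eq_div, ← hshift]
    exact norm_aStar_sub_aStar_sq_le β (X ω) (Xhat ω)
  calc ∫ ω, ‖aStar β (Xhat ω) - aStar β (X ω)‖ ^ 2 ∂μ
      ≤ ∫ ω, 1 / ‖β‖ ^ 2 * (β d0 ^ 2 * (X ω d0 - m) ^ 2) ∂μ :=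
        integral_mono_of_nonneg (ae_of_all _ fun _ => by positivity)
          ((hvar.const_mul _).const_mul _) (ae_of_all _ hpoint)
    _ = 1 / ‖β‖ ^ 2 * (β d0 ^ 2 * σ2) := by rw [integral_const_mul, integral_const_mul, hσ2]
    _ ≤ _ := by
        gcongr
        exact le_add_of_nonneg_right (integral_nonneg fun ω => by split_ifs <;> positivity)

/-- Mean-imputation bound: `E[‖a*(X̂) − a*(X)‖₂²] ≤ (1/‖β‖₂²)(β_{d°}²σ² + E[(β·X)²·1{h_β(X) ≠ h_β(X̂)}])`. -/
theorem stmt4 {D : ℕ} (β : EuclideanSpace ℝ (Fin D)) (hβne : β ≠ 0) (d0 : Fin D)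
    {Ω : Type*} [MeasurableSpace Ω] (μ : Measure Ω) [IsProbabilityMeasure μ]
    (X : Ω → EuclideanSpace ℝ (Fin D)) (hX : Measurable X)
    (hX2 : Integrable (fun ω => (X ω d0) ^ 2) μ)
    (hXβ : Integrable (fun ω => (⟪β, X ω⟫ : ℝ) ^ 2) μ)
    (m σ2 : ℝ) (Xhat : Ω → EuclideanSpace ℝ (Fin D))
    (hm : m = ∫ ω, X ω d0 ∂μ)
    (hσ2 : σ2 = ∫ ω, (X ω d0 - m) ^ 2 ∂μ)
    (hXhat : ∀ ω d, Xhat ω d = if d = d0 then m else X ω d) :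
    ∫ ω, ‖aStar β (Xhat ω) - aStar β (X ω)‖ ^ 2 ∂μ ≤
      (1 / ‖β‖ ^ 2) *
        (β d0 ^ 2 * σ2 +
          ∫ ω, (if hbeta β (X ω) ≠ hbeta β (Xhat ω) then (⟪β, X ω⟫ : ℝ) ^ 2 else 0) ∂μ) :=
  stmt4_general β d0 μ X hX hX2 m σ2 Xhat hσ2 hXhat

end
end

section
/- Let β ∈ ℝ^D with β ≠ 0, let h_β be the linear classifier, and let a*(·) denote the closed-form optimal action. Fix d° ∈ {1, …, D}, x ∈ ℝ^D, and v ∈ ℝ, and let x̂ ∈ ℝ^D satisfy x̂_{d°} = v and x̂_d = x_d for d ≠ d°. Then ‖a*(x̂) − a*(x)‖₂² equals: (β_{d°}²/‖β‖₂²)·(x_{d°} − v)² if h_β(x) = −1 and h_β(x̂) = −1; (1/‖β‖₂²)·(β·x)² if h_β(x) = −1 and h_β(x̂) = +1; (1/‖β‖₂²)·(β·x̂)² if h_β(x) = +1 and h_β(x̂) = −1; and 0 if h_β(x) = +1 and h_β(x̂) = +1. -/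
open scoped RealInnerProductSpace

noncomputable section

/-- At `β = 0` both sides vanish, since `a / 0 = 0`. -/
lemma norm_div_norm_sq_smul_sq {E : Type*} [NormedAddCommGroup E] [NormedSpace ℝ E]
    (a : ℝ) (β : E) : ‖(a / ‖β‖ ^ 2) • β‖ ^ 2 = a ^ 2 / ‖β‖ ^ 2 := by
  rcases eq_or_ne β 0 with rfl | hβ
  · simp
  · have : ‖β‖ ≠ 0 := norm_ne_zero_iff.mpr hβ
    rw [norm_smul, mul_pow, Real.norm_eq_abs, sq_abs]
    field_simp

lemma inner_sub_inner_of_update {D : ℕ} (β x xhat : EuclideanSpace ℝ (Fin D)) (d0 : Fin D)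
    (v : ℝ) (hxhat : ∀ d, xhat d = if d = d0 then v else x d) :
    ⟪β, xhat⟫ - ⟪β, x⟫ = β d0 * (v - x d0) := by
  have hdiff : xhat - x = EuclideanSpace.single d0 (v - x d0) := by
    ext d
    by_cases hd : d = d0
    · subst hd; simp [hxhat]
    · simp [hxhat, hd]
  rw [← inner_sub_right, hdiff, EuclideanSpace.inner_single_right]
  simp [mul_comm]

section aStar

variable {D : ℕ} {β x : EuclideanSpace ℝ (Fin D)}

lemma aStar_of_hbeta_eq_neg_one (h : hbeta β x = -1) :
    aStar β x = -((⟪β, x⟫ / ‖β‖ ^ 2) • β) :=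
  if_pos h

lemma aStar_of_hbeta_eq_one (h : hbeta β x = 1) : aStar β x = 0 :=
  if_neg (by rw [h]; decide)

end aStar

theorem stmt5_general {D : ℕ} (β : EuclideanSpace ℝ (Fin D)) (d0 : Fin D)
    (x xhat : EuclideanSpace ℝ (Fin D)) (v : ℝ)
    (hxhat : ∀ d, xhat d = if d = d0 then v else x d) :
    (hbeta β x = -1 → hbeta β xhat = -1 →
      ‖aStar β xhat - aStar β x‖ ^ 2 = β d0 ^ 2 / ‖β‖ ^ 2 * (x d0 - v) ^ 2) ∧
    (hbeta β x = -1 → hbeta β xhat = 1 →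
      ‖aStar β xhat - aStar β x‖ ^ 2 = 1 / ‖β‖ ^ 2 * (⟪β, x⟫ : ℝ) ^ 2) ∧
    (hbeta β x = 1 → hbeta β xhat = -1 →
      ‖aStar β xhat - aStar β x‖ ^ 2 = 1 / ‖β‖ ^ 2 * (⟪β, xhat⟫ : ℝ) ^ 2) ∧
    (hbeta β x = 1 → hbeta β xhat = 1 →
      ‖aStar β xhat - aStar β x‖ ^ 2 = 0) := by
  refine ⟨fun hcx hcxhat => ?_, fun hcx hcxhat => ?_, fun hcx hcxhat => ?_, fun hcx hcxhat => ?_⟩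
  · have hshift := inner_sub_inner_of_update β x xhat d0 v hxhat
    rw [aStar_of_hbeta_eq_neg_one hcxhat, aStar_of_hbeta_eq_neg_one hcx, neg_sub_neg, ← sub_smul,
      div_sub_div_same, norm_div_norm_sq_smul_sq,
      show ⟪β, x⟫ - ⟪β, xhat⟫ = -(β d0 * (v - x d0)) by linarith]
    ring
  · rw [aStar_of_hbeta_eq_one hcxhat, aStar_of_hbeta_eq_neg_one hcx, zero_sub, norm_neg, norm_neg,
      norm_div_norm_sq_smul_sq]
    ring
  · rw [aStar_of_hbeta_eq_neg_one hcxhat, aStar_of_hbeta_eq_one hcx, sub_zero, norm_neg,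
      norm_div_norm_sq_smul_sq]
    ring
  · rw [aStar_of_hbeta_eq_one hcxhat, aStar_of_hbeta_eq_one hcx, sub_zero, norm_zero]
    ring

/-- The four-case closed form of `‖a*(x̂) − a*(x)‖₂²` under single-feature imputation. -/
theorem stmt5 {D : ℕ} (β : EuclideanSpace ℝ (Fin D)) (hβne : β ≠ 0) (d0 : Fin D)
    (x xhat : EuclideanSpace ℝ (Fin D)) (v : ℝ)
    (hxhat : ∀ d, xhat d = if d = d0 then v else x d) :
    (hbeta β x = -1 → hbeta β xhat = -1 →
      ‖aStar β xhat - aStar β x‖ ^ 2 = β d0 ^ 2 / ‖β‖ ^ 2 * (x d0 - v) ^ 2) ∧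
    (hbeta β x = -1 → hbeta β xhat = 1 →
      ‖aStar β xhat - aStar β x‖ ^ 2 = 1 / ‖β‖ ^ 2 * (⟪β, x⟫ : ℝ) ^ 2) ∧
    (hbeta β x = 1 → hbeta β xhat = -1 →
      ‖aStar β xhat - aStar β x‖ ^ 2 = 1 / ‖β‖ ^ 2 * (⟪β, xhat⟫ : ℝ) ^ 2) ∧
    (hbeta β x = 1 → hbeta β xhat = 1 →
      ‖aStar β xhat - aStar β x‖ ^ 2 = 0) :=
  stmt5_general β d0 x xhat v hxhat

end
end

section
/- Let β ∈ ℝ^D with β ≠ 0, let h_β be the linear classifier, and let a*(·) denote the closed-form optimal action. Fix d° ∈ {1, …, D}. Let X be a random vector in ℝ^D with (β·X)² integrable, and let G be a real-valued random variable of the form G = g((X_d)_{d ≠ d°}) for a measurable function g of the coordinates other than d° (an imputation of the missing feature d°), with (X_{d°} − G)² integrable. Let X̂ be the random vector with X̂_{d°} = G and X̂_d = X_d for d ≠ d°. Then E[‖a*(X̂) − a*(X)‖₂²] ≤ (1/‖β‖₂²) · ( β_{d°}² · E[(X_{d°} − G)²] + E[(β·X)² · 1{h_β(X) ≠ h_β(X̂)}]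 ). -/
open MeasureTheory
open scoped RealInnerProductSpace

noncomputable section

/-! The bound holds pointwise, before taking expectations. Both actions are multiples of `β`,
`a*(x) = -(min (β·x) 0 / ‖β‖²) β`, so `‖a*(y) - a*(x)‖² = (min (β·y) 0 - min (β·x) 0)² / ‖β‖²`.
Since `s ↦ min s 0` is 1-Lipschitz, this is at most `(β·y - β·x)² / ‖β‖²` when `x` and `y` lie on the
same side of the hyperplane; when they do not, the extra cost is at most `(β·x)² / ‖β‖²`.
For `y = X̂`, `x = X` only coordinate `d°` differs, so `β·X̂ - β·X = β_{d°} (G - X_{d°})`. -/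

section LinearClassifier

variable {D : ℕ} (β : EuclideanSpace ℝ (Fin D))

theorem hbeta_eq_hbeta_iff (x y : EuclideanSpace ℝ (Fin D)) :
    hbeta β x = hbeta β y ↔ (0 ≤ ⟪β, x⟫ ↔ 0 ≤ ⟪β, y⟫) := by
  unfold hbeta
  split_ifs with hx hy hy <;> simp [hx, hy]

theorem measurable_hbeta : Measurable (hbeta β) :=
  Measurable.ite (measurableSet_le measurable_const (measurable_const.inner measurable_id))
    measurable_const measurable_const

theorem aStar_eq_min_smul (x : EuclideanSpace ℝ (Fin D)) :
    aStar β x = -((min ⟪β, x⟫ 0 / ‖β‖ ^ 2) • β) := by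
  unfold aStar hbeta
  rcases le_or_gt 0 ⟪β, x⟫ with h | h
  · simp [h]
  · simp [h.not_ge, min_eq_left h.le]

theorem norm_aStar_sub_sq (x y : EuclideanSpace ℝ (Fin D)) :
    ‖aStar β y - aStar β x‖ ^ 2 = (min ⟪β, y⟫ 0 - min ⟪β, x⟫ 0) ^ 2 / ‖β‖ ^ 2 := by
  have hdiff : aStar β y - aStar β x =
      ((min ⟪β, x⟫ 0 - min ⟪β, y⟫ 0) / ‖β‖ ^ 2) • β := by
    rw [aStar_eq_min_smul, aStar_eq_min_smul, sub_div, sub_smul]; abel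
  rw [hdiff, norm_smul, mul_pow, Real.norm_eq_abs, sq_abs]
  rcases eq_or_ne ‖β‖ 0 with hβ | hβ
  · simp [hβ]
  · field_simp; ring

theorem sq_min_zero_sub_min_zero_le_s7 (s t : ℝ) :
    (min t 0 - min s 0) ^ 2 ≤ (t - s) ^ 2 + if (0 ≤ s ↔ 0 ≤ t) then 0 else s ^ 2 := by
  rcases le_or_gt 0 s with hs | hs <;> rcases le_or_gt 0 t with ht | ht
  · simp [hs, ht, sq_nonneg]
  · simp only [min_eq_right hs, min_eq_left ht.le, hs, ht.not_ge, iff_false, not_true_eq_false,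
      if_false]
    nlinarith
  · simp only [min_eq_left hs.le, min_eq_right ht, hs.not_ge, ht, iff_true, if_false]
    nlinarith
  · simp [min_eq_left hs.le, min_eq_left ht.le, hs.not_ge, ht.not_ge]

theorem norm_aStar_sub_sq_le (x y : EuclideanSpace ℝ (Fin D)) :
    ‖aStar β y - aStar β x‖ ^ 2 ≤
      1 / ‖β‖ ^ 2 * ((⟪β, y⟫ - ⟪β, x⟫) ^ 2 +
        if hbeta β x ≠ hbeta β y then ⟪β, x⟫ ^ 2 else 0) := by
  rw [norm_aStar_sub_sq, one_div_mul_eq_div]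
  simp only [ne_eq, hbeta_eq_hbeta_iff, ite_not]
  gcongr
  exact sq_min_zero_sub_min_zero_le_s7 _ _

theorem integrable_ite_hbeta_ne {Ω : Type*} [MeasurableSpace Ω] {μ : Measure Ω}
    {X Y : Ω → EuclideanSpace ℝ (Fin D)} {f : Ω → ℝ} (hX : Measurable X) (hY : Measurable Y)
    (hf : Integrable f μ) :
    Integrable (fun ω => if hbeta β (X ω) ≠ hbeta β (Y ω) then f ω else 0) μ :=
  (hf.indicator (measurableSet_eq_fun ((measurable_hbeta β).comp hX)
      ((measurable_hbeta β).comp hY)).compl).congr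
    (.of_forall fun ω => by simp [Set.indicator_apply])

end LinearClassifier

theorem measurable_of_eq_ite_coord {Ω : Type*} [MeasurableSpace Ω] {D : ℕ}
    {X Y : Ω → EuclideanSpace ℝ (Fin D)} {G : Ω → ℝ} {i : Fin D} (hX : Measurable X)
    (hG : Measurable G) (hY : ∀ ω d, Y ω d = if d = i then G ω else X ω d) : Measurable Y := by
  have hY_eq : Y = fun ω => WithLp.toLp 2 fun d => if d = i then G ω else X ω d :=
    funext fun ω => by ext d; exact hY ω d
  rw [hY_eq]
  refine (WithLp.measurable_toLp _ _).comp (measurable_pi_lambda _ fun d => ?_)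
  split_ifs
  exacts [hG, ((WithLp.measurable_ofLp _ _).comp hX).eval]

theorem inner_sub_inner_eq_of_eq_off {D : ℕ} (β x y : EuclideanSpace ℝ (Fin D)) (i : Fin D)
    (hxy : ∀ j ≠ i, y j = x j) : ⟪β, y⟫ - ⟪β, x⟫ = β i * (y i - x i) := by
  have hsingle : y - x = EuclideanSpace.single i (y i - x i) := by
    ext j
    by_cases hj : j = i
    · subst hj; simp
    · simp [hj, hxy j hj]
  rw [← inner_sub_right, hsingle, EuclideanSpace.inner_single_right]
  simp [mul_comm]

theorem stmt7_general {D : ℕ} (β : EuclideanSpace ℝ (Fin D)) (d0 : Fin D)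
    {Ω : Type*} [MeasurableSpace Ω] (μ : Measure Ω)
    (X : Ω → EuclideanSpace ℝ (Fin D)) (hX : Measurable X)
    (hXβ : Integrable (fun ω => (⟪β, X ω⟫ : ℝ) ^ 2) μ)
    (G : Ω → ℝ)
    (hGform : ∃ g : ({d : Fin D // d ≠ d0} → ℝ) → ℝ,
      Measurable g ∧ ∀ ω, G ω = g fun d => X ω d.1)
    (hG2 : Integrable (fun ω => (X ω d0 - G ω) ^ 2) μ)
    (Xhat : Ω → EuclideanSpace ℝ (Fin D))
    (hXhat : ∀ ω d, Xhat ω d = if d = d0 then G ω else X ω d) :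
    ∫ ω, ‖aStar β (Xhat ω) - aStar β (X ω)‖ ^ 2 ∂μ ≤
      (1 / ‖β‖ ^ 2) *
        (β d0 ^ 2 * (∫ ω, (X ω d0 - G ω) ^ 2 ∂μ) +
          ∫ ω, (if hbeta β (X ω) ≠ hbeta β (Xhat ω) then (⟪β, X ω⟫ : ℝ) ^ 2 else 0) ∂μ) := by
  have hG : Measurable G := by
    obtain ⟨g, hg, hGg⟩ := hGform
    exact (funext hGg).symm ▸
      hg.comp (measurable_pi_lambda _ fun d => ((WithLp.measurable_ofLp _ _).comp hX).eval)
  have hflip := integrable_ite_hbeta_ne β hX (measurable_of_eq_ite_coord hX hG hXhat) hXβ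
  have hpointwise (ω : Ω) : ‖aStar β (Xhat ω) - aStar β (X ω)‖ ^ 2 ≤
      1 / ‖β‖ ^ 2 * (β d0 ^ 2 * (X ω d0 - G ω) ^ 2 +
        if hbeta β (X ω) ≠ hbeta β (Xhat ω) then ⟪β, X ω⟫ ^ 2 else 0) := by
    have hshift := inner_sub_inner_eq_of_eq_off β (X ω) (Xhat ω) d0 fun d hd => by
      simp [hXhat, hd]
    rw [hXhat ω d0, if_pos rfl] at hshift
    convert norm_aStar_sub_sq_le β (X ω) (Xhat ω) using 3
    rw [hshift]; ring
  calc ∫ ω, ‖aStar β (Xhat ω) - aStar β (X ω)‖ ^ 2 ∂μ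
      ≤ ∫ ω, 1 / ‖β‖ ^ 2 * (β d0 ^ 2 * (X ω d0 - G ω) ^ 2 +
          if hbeta β (X ω) ≠ hbeta β (Xhat ω) then ⟪β, X ω⟫ ^ 2 else 0) ∂μ :=
        integral_mono_of_nonneg (.of_forall fun _ => by positivity)
          (((hG2.const_mul _).add hflip).const_mul _) (.of_forall hpointwise)
    _ = _ := by rw [integral_const_mul, integral_add (hG2.const_mul _) hflip, integral_const_mul]

/-- General imputation bound:
`E[‖a*(X̂) − a*(X)‖₂²] ≤ (1/‖β‖₂²)(β_{d°}²·E[(X_{d°} − G)²] + E[(β·X)²·1{h_β(X) ≠ h_β(X̂)}])`,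
where `G` is a measurable imputation of the missing coordinate `d°` computed from the
other coordinates of `X`. -/
theorem stmt7 {D : ℕ} (β : EuclideanSpace ℝ (Fin D)) (hβne : β ≠ 0) (d0 : Fin D)
    {Ω : Type*} [MeasurableSpace Ω] (μ : Measure Ω) [IsProbabilityMeasure μ]
    (X : Ω → EuclideanSpace ℝ (Fin D)) (hX : Measurable X)
    (hXβ : Integrable (fun ω => (⟪β, X ω⟫ : ℝ) ^ 2) μ)
    (G : Ω → ℝ)
    (hGform : ∃ g : ({d : Fin D // d ≠ d0} → ℝ) → ℝ,
      Measurable g ∧ ∀ ω, G ω = g fun d => X ω d.1)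
    (hG2 : Integrable (fun ω => (X ω d0 - G ω) ^ 2) μ)
    (Xhat : Ω → EuclideanSpace ℝ (Fin D))
    (hXhat : ∀ ω d, Xhat ω d = if d = d0 then G ω else X ω d) :
    ∫ ω, ‖aStar β (Xhat ω) - aStar β (X ω)‖ ^ 2 ∂μ ≤
      (1 / ‖β‖ ^ 2) *
        (β d0 ^ 2 * (∫ ω, (X ω d0 - G ω) ^ 2 ∂μ) +
          ∫ ω, (if hbeta β (X ω) ≠ hbeta β (Xhat ω) then (⟪β, X ω⟫ : ℝ) ^ 2 else 0) ∂μ) :=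
  stmt7_general β d0 μ X hX hXβ G hGform hG2 Xhat hXhat

end
end
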